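/- arXiv:2502.06746 — 2 statements merged into one kernel-verified Lean document; each statement's English description precedes it below -/
import Mathlib

section
/- Let X be a closed acausal subset of the pseudo-Euclidean space ℝ_{(l,p)}. Then for every point a ∈ X one has N(a) = closure(N'(a)). -/
open Filter Topology Set

noncomputable section

/-- The pseudo-Euclidean space `ℝ_{(l,p)}`: `ℝ^(l+p)` with the Euclidean topology. -/
abbrev PE (l p : ℕ) := EuclideanSpace ℝ (Fin (l + p))

/-- The quadratic form `Q(x) = ‖x‖_l² − ‖x‖_p²`. -/
def Q (l p : ℕ) (x : PE l p) : ℝ :=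
  ∑ i : Fin (l + p), if (i : ℕ) < l then (x i) ^ 2 else -((x i) ^ 2)

/-- The pseudo-scalar product `⟪x,y⟫ = Σ_{i<l} x_i y_i − Σ_{i≥l} x_i y_i`. -/
def pseudoInner (l p : ℕ) (x y : PE l p) : ℝ :=
  ∑ i : Fin (l + p), if (i : ℕ) < l then x i * y i else -(x i * y i)

/-- `‖x‖_l`: the Euclidean norm of the first `l` coordinates. -/
def normL (l p : ℕ) (x : PE l p) : ℝ :=
  Real.sqrt (∑ i : Fin (l + p), if (i : ℕ) < l then (x i) ^ 2 else 0)

/-- `‖x‖_p`: the Euclidean norm of the last `p` coordinates. -/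
def normP (l p : ℕ) (x : PE l p) : ℝ :=
  Real.sqrt (∑ i : Fin (l + p), if (i : ℕ) < l then 0 else (x i) ^ 2)

/-- `X` is acausal: `Q(x−y) > 0` for all distinct `x, y ∈ X`. -/
def Acausal (l p : ℕ) (X : Set (PE l p)) : Prop :=
  ∀ x ∈ X, ∀ y ∈ X, x ≠ y → 0 < Q l p (x - y)

/-- `X` is `L`-pseudo-Lipschitz: `L‖x−y‖_l ≥ ‖x−y‖_p` for all `x, y ∈ X`. -/
def PseudoLipschitz (l p : ℕ) (L : ℝ) (X : Set (PE l p)) : Prop :=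
  ∀ x ∈ X, ∀ y ∈ X, normP l p (x - y) ≤ L * normL l p (x - y)

/-- The squared-distance function `ρ(a,X) = inf {Q(x−a) : x ∈ X}`. -/
def rho (l p : ℕ) (X : Set (PE l p)) (a : PE l p) : ℝ :=
  sInf ((fun x => Q l p (x - a)) '' X)

/-- The set of closest points `m(a) = {x ∈ X : Q(x−a) = ρ(a,X)}`, via its equivalent
description `m(a) = {x ∈ X : ∀ b ∈ X, Q(x−a) ≤ Q(b−a)}`. -/
def mm (l p : ℕ) (X : Set (PE l p)) (a : PE l p) : Set (PE l p) :=
  {x ∈ X | ∀ b ∈ X, Q l p (x - a) ≤ Q l p (b - a)}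

/-- The medial axis `M_X`: points with at least two closest points in `X`. -/
def medialAxis (l p : ℕ) (X : Set (PE l p)) : Set (PE l p) :=
  {a | (mm l p X a).Nontrivial}

/-- The vacant axis `W_X`: points with no closest point in `X`. -/
def vacantAxis (l p : ℕ) (X : Set (PE l p)) : Set (PE l p) :=
  {a | mm l p X a = ∅}

/-- The normal set `N(a) = {x : a ∈ m(x)}`. -/
def NN (l p : ℕ) (X : Set (PE l p)) (a : PE l p) : Set (PE l p) :=
  {x | a ∈ mm l p X x}

/-- The strict normal set `N'(a) = {x : m(x) = {a}}`. -/
def NN' (l p : ℕ) (X : Set (PE l p)) (a : PE l p) : Set (PE l p) :=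
  {x | mm l p X x = {a}}

/-
Moving from `a` towards a point `x` with `a ∈ m(x)`, the quantity `Q(b - y) - Q(a - y)` at
`y = a + t • (x - a)` is affine in `t`: it is `Q(b - a) > 0` at `t = 0` (acausality) and `≥ 0` at
`t = 1`, hence positive on `[0, 1)`. So `a` is the unique closest point of every point of the open
segment from `a` to `x`, which places `x` in the closure of `N'(a)`. Conversely `N(a)` is closed,
being an intersection of sublevel sets of continuous functions.
-/

section

variable {l p : ℕ}

lemma continuous_Q : Continuous (Q l p) :=
  continuous_finsetSum _ fun i _ => by split_ifs <;> fun_prop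

lemma Q_sub_smul (u v : PE l p) (t : ℝ) :
    Q l p (u - t • v) = Q l p u - 2 * t * pseudoInner l p u v + t ^ 2 * Q l p v := by
  simp only [Q, pseudoInner, Finset.mul_sum, ← Finset.sum_sub_distrib, ← Finset.sum_add_distrib]
  refine Finset.sum_congr rfl fun i _ => ?_
  simp only [PiLp.sub_apply, PiLp.smul_apply, smul_eq_mul]
  split_ifs <;> ring

lemma Q_sub_add_smul_sub_Q (a b v : PE l p) (t : ℝ) :
    Q l p (b - (a + t • v)) - Q l p (a - (a + t • v))
      = Q l p (b - a) - 2 * t * pseudoInner l p (b - a) v := by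
  have hb : b - (a + t • v) = (b - a) - t • v := by abel
  have ha : a - (a + t • v) = (0 : PE l p) - t • v := by abel
  rw [hb, ha, Q_sub_smul, Q_sub_smul]
  simp [Q, pseudoInner]

variable {X : Set (PE l p)}

lemma mm_eq_singleton {a y : PE l p} (ha : a ∈ X)
    (hlt : ∀ b ∈ X, b ≠ a → Q l p (a - y) < Q l p (b - y)) : mm l p X y = {a} := by
  ext z
  simp only [mm, mem_ofPred_eq, mem_singleton_iff]
  constructor
  · rintro ⟨hz, hzmin⟩
    by_contra hza
    exact (hlt z hz hza).not_ge (hzmin a ha)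
  · rintro rfl
    refine ⟨ha, fun b hb => ?_⟩
    rcases eq_or_ne b z with rfl | hbz
    · exact le_rfl
    · exact (hlt b hb hbz).le

lemma NN'_subset_NN (a : PE l p) : NN' l p X a ⊆ NN l p X a := fun x (hx : mm l p X x = {a}) =>
  show a ∈ mm l p X x from hx ▸ rfl

lemma isClosed_NN (a : PE l p) : IsClosed (NN l p X a) := by
  have h : NN l p X a = {_x | a ∈ X} ∩ ⋂ b ∈ X, {x | Q l p (a - x) ≤ Q l p (b - x)} := by
    ext x
    simp [NN, mm]
  rw [h]
  exact isClosed_const.inter <| isClosed_biInter fun b _ =>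
    isClosed_le (continuous_Q.comp (by fun_prop)) (continuous_Q.comp (by fun_prop))

lemma openSegment_subset_NN' (hac : Acausal l p X) {a x : PE l p} (hx : x ∈ NN l p X a) :
    openSegment ℝ a x ⊆ NN' l p X a := by
  obtain ⟨ha, hmin⟩ := hx
  rw [openSegment_eq_image']
  rintro _ ⟨t, ⟨ht0, ht1⟩, rfl⟩
  refine mm_eq_singleton ha fun b hb hba => sub_pos.1 ?_
  have hpos : 0 < Q l p (b - a) := hac b hb a ha hba
  have hend : 0 ≤ Q l p (b - a) - 2 * 1 * pseudoInner l p (b - a) (x - a) := by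
    rw [← Q_sub_add_smul_sub_Q, one_smul, add_sub_cancel, sub_nonneg]
    exact hmin b hb
  rw [Q_sub_add_smul_sub_Q]
  nlinarith [mul_pos (sub_pos.2 ht1) hpos, mul_nonneg ht0.le hend]

end

theorem normalSet_eq_closure_strictNormalSet_general (l p : ℕ)
    (X : Set (PE l p)) (hac : Acausal l p X) :
    ∀ a ∈ X, NN l p X a = closure (NN' l p X a) := by
  intro a _
  refine Subset.antisymm (fun x hx => ?_) (closure_minimal (NN'_subset_NN a) (isClosed_NN a))
  exact closure_mono (openSegment_subset_NN' hac hx) <|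
    segment_subset_closure_openSegment (right_mem_segment ℝ a x)

/-- For closed acausal `X` and every `a ∈ X`, `N(a) = closure (N'(a))`. -/
theorem normalSet_eq_closure_strictNormalSet (l p : ℕ) (hl : 1 ≤ l)
    (X : Set (PE l p)) (hX : IsClosed X) (hac : Acausal l p X) :
    ∀ a ∈ X, NN l p X a = closure (NN' l p X a) :=
  normalSet_eq_closure_strictNormalSet_general l p X hac
end
end

section
/- Let X be a nonempty closed L-pseudo-Lipschitz subset of the pseudo-Euclidean space ℝ_{(l,p)} with L < 1 which is C²-regular of dimension k at a point x ∈ X, i.e. there exist an open neighbourhood U of x in ℝ^n, an open set V ⊂ ℝ^k, a point t₀ ∈ V, and a C² map g : V → ℝ^n with g(t₀) = x, g a homeomorphism of V onto X ∩ U, and the differential Dg(t) injective for every t ∈ V. Then x ∉ closure(M_X). -/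
/-!
The pseudo-Lipschitz condition with `L < 1` makes `Q` uniformly positive on differences of
points of `X`: `Q (y - z) ≥ c ‖y - z‖²`. If `y₁ = g t₁` and `y₂ = g t₂` are both closest to `a`,
then expanding `Q (y₁ - a) = Q (y₂ - a)` around `y₂` gives `Q (y₁ - y₂) = -2 ⟪y₁ - y₂, y₂ - a⟫`.
The first-order condition at `t₂` kills the tangential part `Dg(t₂) (t₁ - t₂)` of `y₁ - y₂`,
leaving the Taylor remainder, which is `O(‖t₁ - t₂‖²) = O(‖y₁ - y₂‖²)` because `g` is
locally bi-Lipschitz. Closest points of `a` stay within `O(‖x - a‖)` of `x`, so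
`|⟪y₁ - y₂, y₂ - a⟫| = O(‖x - a‖) ‖y₁ - y₂‖²`, contradicting the lower bound for `a` near `x`
unless `y₁ = y₂`.
-/

open Filter Topology Set

noncomputable section

open scoped NNReal

section General

variable {E F : Type*} [NormedAddCommGroup E] [NormedSpace ℝ E]
  [NormedAddCommGroup F] [NormedSpace ℝ F]

theorem Convex.norm_image_sub_sub_le_of_lipschitzOnWith {g : F → E} {g' : F → F →L[ℝ] E}
    {W : Set F} {M : ℝ≥0} (hW : Convex ℝ W) (hg : ∀ t ∈ W, HasFDerivWithinAt g (g' t) W t)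
    (hg' : LipschitzOnWith M g' W) {t₁ t₂ : F} (h₁ : t₁ ∈ W) (h₂ : t₂ ∈ W) :
    ‖g t₁ - g t₂ - g' t₂ (t₁ - t₂)‖ ≤ M * ‖t₁ - t₂‖ ^ 2 := by
  have hseg : segment ℝ t₂ t₁ ⊆ W := hW.segment_subset h₂ h₁
  have bound : ∀ t ∈ segment ℝ t₂ t₁, ‖g' t - g' t₂‖ ≤ M * ‖t₁ - t₂‖ := fun t ht =>
    (hg'.norm_sub_le (hseg ht) h₂).trans <| by
      gcongr; exact norm_sub_le_of_mem_segment ht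
  have := (convex_segment t₂ t₁).norm_image_sub_le_of_norm_hasFDerivWithin_le'
    (fun t ht => (hg t (hseg ht)).mono hseg) bound
    (left_mem_segment ℝ t₂ t₁) (right_mem_segment ℝ t₂ t₁)
  linarith

theorem HasStrictFDerivAt.exists_norm_sub_le_mul_norm_image_sub [FiniteDimensional ℝ F]
    {g : F → E} {g' : F →L[ℝ] E} {t₀ : F} (hg : HasStrictFDerivAt g g' t₀)
    (hinj : Function.Injective g') :
    ∃ K : ℝ, ∃ s ∈ 𝓝 t₀, ∀ t₁ ∈ s, ∀ t₂ ∈ s, ‖t₁ - t₂‖ ≤ K * ‖g t₁ - g t₂‖ := by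
  obtain ⟨N, hN, hgN⟩ := g'.toLinearMap.exists_antilipschitzWith (LinearMap.ker_eq_bot.mpr hinj)
  obtain ⟨s, hs, happrox⟩ := hg.approximates_deriv_on_nhds (c := (2 * N)⁻¹) (.inr (by positivity))
  refine ⟨2 * N, s, hs, fun t₁ h₁ t₂ h₂ => ?_⟩
  have hlin : ‖t₁ - t₂‖ ≤ N * ‖g' (t₁ - t₂)‖ := by
    simpa [dist_eq_norm] using hgN.le_mul_dist (t₁ - t₂) 0
  have hrem : ‖g t₁ - g t₂ - g' (t₁ - t₂)‖ ≤ (2 * N : ℝ)⁻¹ * ‖t₁ - t₂‖ := by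
    simpa using happrox t₁ h₁ t₂ h₂
  have htri : ‖g' (t₁ - t₂)‖ ≤ ‖g t₁ - g t₂‖ + ‖g t₁ - g t₂ - g' (t₁ - t₂)‖ := by
    simpa using norm_sub_le (g t₁ - g t₂) (g t₁ - g t₂ - g' (t₁ - t₂))
  have hN' : (0 : ℝ) < N := by exact_mod_cast hN
  have hhalf : (N : ℝ) * ((2 * (N : ℝ))⁻¹ * ‖t₁ - t₂‖) = ‖t₁ - t₂‖ / 2 := by field_simp
  nlinarith

namespace ContinuousLinearMap

variable (B : E →L[ℝ] E →L[ℝ] ℝ) {X : Set E} {c : ℝ}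

theorem abs_apply_add_apply_swap_le (u v : E) :
    |B u v + B v u| ≤ 2 * ‖B‖ * ‖u‖ * ‖v‖ := by
  have h₁ := B.le_opNorm₂ u v
  have h₂ := B.le_opNorm₂ v u
  rw [Real.norm_eq_abs] at h₁ h₂
  calc |B u v + B v u| ≤ |B u v| + |B v u| := abs_add_le _ _
    _ ≤ 2 * ‖B‖ * ‖u‖ * ‖v‖ := by linarith

theorem apply_sub_self_le_of_le {a y z : E} (h : B (y - a) (y - a) ≤ B (z - a) (z - a)) :
    B (y - z) (y - z) ≤ -(B (y - z) (z - a) + B (z - a) (y - z)) := by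
  rw [show y - a = (y - z) + (z - a) by abel] at h
  simp only [map_add, add_apply] at h
  linarith

theorem apply_add_apply_swap_fderiv_eq_zero {g : F → E} {g' : F →L[ℝ] E} {t : F} {a : E}
    (hg : HasFDerivAt g g' t) (hmin : IsLocalMin (fun s => B (g s - a) (g s - a)) t) (v : F) :
    B (g t - a) (g' v) + B (g' v) (g t - a) = 0 := by
  have hsub : HasFDerivAt (fun s => g s - a) g' t := hg.sub_const a
  have h := congrArg (· v) (hmin.hasFDerivAt_eq_zero (B.hasFDerivAt_of_bilinear hsub hsub))
  simpa using h

theorem mul_norm_sub_le_of_isMinOn (hc : ∀ y ∈ X, ∀ z ∈ X, c * ‖y - z‖ ^ 2 ≤ B (y - z) (y - z))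
    {a x y : E} (hx : x ∈ X) (hy : y ∈ X) (hmin : IsMinOn (fun z => B (z - a) (z - a)) X y) :
    c * ‖y - x‖ ≤ 2 * ‖B‖ * ‖x - a‖ := by
  have hsq : c * ‖y - x‖ ^ 2 ≤ 2 * ‖B‖ * ‖x - a‖ * ‖y - x‖ :=
    calc c * ‖y - x‖ ^ 2 ≤ B (y - x) (y - x) := hc y hy x hx
      _ ≤ -(B (y - x) (x - a) + B (x - a) (y - x)) := B.apply_sub_self_le_of_le (hmin hx)
      _ ≤ 2 * ‖B‖ * ‖y - x‖ * ‖x - a‖ := (neg_le_abs _).trans (B.abs_apply_add_apply_swap_le _ _)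
      _ = 2 * ‖B‖ * ‖x - a‖ * ‖y - x‖ := by ring
  rcases (norm_nonneg (y - x)).eq_or_lt with h | h
  · rw [← h, mul_zero]; positivity
  · nlinarith

theorem mul_norm_sub_sq_le_of_isMinOn_of_isMinOn
    (hc : ∀ y ∈ X, ∀ z ∈ X, c * ‖y - z‖ ^ 2 ≤ B (y - z) (y - z))
    {g : F → E} {g' : F → F →L[ℝ] E} {W : Set F} {M : ℝ≥0} {K : ℝ}
    (hWo : IsOpen W) (hWc : Convex ℝ W) (hgX : MapsTo g W X)
    (hg : ∀ t ∈ W, HasFDerivAt g (g' t) t) (hg' : LipschitzOnWith M g' W)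
    (hK : ∀ t₁ ∈ W, ∀ t₂ ∈ W, ‖t₁ - t₂‖ ≤ K * ‖g t₁ - g t₂‖)
    {a : E} {t₁ t₂ : F} (h₁ : t₁ ∈ W) (h₂ : t₂ ∈ W)
    (hmin₁ : IsMinOn (fun y => B (y - a) (y - a)) X (g t₁))
    (hmin₂ : IsMinOn (fun y => B (y - a) (y - a)) X (g t₂)) :
    c * ‖g t₁ - g t₂‖ ^ 2 ≤ 2 * ‖B‖ * M * K ^ 2 * ‖g t₂ - a‖ * ‖g t₁ - g t₂‖ ^ 2 := by
  set d := g t₁ - g t₂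
  set w := g t₂ - a
  set R := d - g' t₂ (t₁ - t₂)
  have hcrit : B w (g' t₂ (t₁ - t₂)) + B (g' t₂ (t₁ - t₂)) w = 0 :=
    B.apply_add_apply_swap_fderiv_eq_zero (hg t₂ h₂)
      ((hmin₂.comp_mapsTo hgX rfl).isLocalMin (hWo.mem_nhds h₂)) _
  have hd : d = R + g' t₂ (t₁ - t₂) := by simp [R]
  have hR : ‖R‖ ≤ M * ‖t₁ - t₂‖ ^ 2 := hWc.norm_image_sub_sub_le_of_lipschitzOnWith
    (fun t ht => (hg t ht).hasFDerivWithinAt) hg' h₁ h₂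
  have hΔ : ‖t₁ - t₂‖ ^ 2 ≤ K ^ 2 * ‖d‖ ^ 2 := by
    rw [← mul_pow]; exact pow_le_pow_left₀ (norm_nonneg _) (hK t₁ h₁ t₂ h₂) 2
  calc c * ‖d‖ ^ 2 ≤ B d d := hc _ (hgX h₁) _ (hgX h₂)
    _ ≤ -(B d w + B w d) := B.apply_sub_self_le_of_le (hmin₁ (hgX h₂))
    _ = -(B R w + B w R) := by
      rw [hd]; simp only [map_add, add_apply]; linarith
    _ ≤ 2 * ‖B‖ * ‖R‖ * ‖w‖ := (neg_le_abs _).trans (B.abs_apply_add_apply_swap_le _ _)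
    _ ≤ 2 * ‖B‖ * (M * (K ^ 2 * ‖d‖ ^ 2)) * ‖w‖ := by
      gcongr; exact hR.trans (by gcongr)
    _ = 2 * ‖B‖ * M * K ^ 2 * ‖w‖ * ‖d‖ ^ 2 := by ring

theorem eventually_subsingleton_isMinOn [FiniteDimensional ℝ F] (hc₀ : 0 < c)
    (hc : ∀ y ∈ X, ∀ z ∈ X, c * ‖y - z‖ ^ 2 ≤ B (y - z) (y - z))
    {g : F → E} {t₀ : F} (hg : ContDiffAt ℝ 2 g t₀) (hDg : Function.Injective (fderiv ℝ g t₀))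
    (hgX : ∀ᶠ t in 𝓝 t₀, g t ∈ X) (hchart : 𝓝[X] (g t₀) ≤ map g (𝓝 t₀)) :
    ∀ᶠ a in 𝓝 (g t₀), {y ∈ X | IsMinOn (fun y => B (y - a) (y - a)) X y}.Subsingleton := by
  obtain ⟨K, s₁, hs₁, hK⟩ :=
    (hg.hasStrictFDerivAt (by norm_num)).exists_norm_sub_le_mul_norm_image_sub hDg
  obtain ⟨M, s₂, hs₂, hM⟩ := (hg.fderiv_right (m := 1) (by norm_num)).exists_lipschitzOnWith
  have hdiff : ∀ᶠ t in 𝓝 t₀, HasFDerivAt g (fderiv ℝ g t) t :=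
    (hg.eventually (by simp)).mono fun t ht => (ht.differentiableAt (by norm_num)).hasFDerivAt
  obtain ⟨r, hr, hW⟩ :=
    Metric.mem_nhds_iff.mp (inter_mem (inter_mem hs₁ hs₂) (hdiff.and hgX))
  obtain ⟨ε, hε, hεW⟩ :=
    Metric.mem_nhdsWithin_iff.mp (hchart (image_mem_map (Metric.ball_mem_nhds t₀ hr)))
  set κ := 2 * ‖B‖ * M * K ^ 2
  -- `hloc` keeps every closest point inside the chart; `hκ` makes the Taylor remainder too
  -- small to account for `B (y₁ - y₂) (y₁ - y₂) ≥ c ‖y₁ - y₂‖²`.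
  have hsmall : ∀ᶠ a in 𝓝 (g t₀),
      2 * ‖B‖ * ‖g t₀ - a‖ < c * ε ∧ κ * ((2 * ‖B‖ + c) * ‖g t₀ - a‖) < c ^ 2 :=
    (ContinuousAt.eventually_lt (by fun_prop) continuousAt_const
      (by simpa using mul_pos hc₀ hε)).and
    (ContinuousAt.eventually_lt (by fun_prop) continuousAt_const (by simpa using pow_pos hc₀ 2))
  filter_upwards [hsmall] with a ⟨hloc, hκ⟩
  have hnear : ∀ y ∈ X, IsMinOn (fun y => B (y - a) (y - a)) X y →
      ∃ t ∈ Metric.ball t₀ r, g t = y ∧ c * ‖y - g t₀‖ ≤ 2 * ‖B‖ * ‖g t₀ - a‖ := by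
    intro y hy hmin
    have hdist := B.mul_norm_sub_le_of_isMinOn hc hgX.self_of_nhds hy hmin
    have hyε : y ∈ Metric.ball (g t₀) ε := by
      rw [Metric.mem_ball, dist_eq_norm]
      exact lt_of_mul_lt_mul_left (hdist.trans_lt hloc) hc₀.le
    obtain ⟨t, ht, rfl⟩ := hεW ⟨hyε, hy⟩
    exact ⟨t, ht, rfl, hdist⟩
  rintro y₁ ⟨hy₁, hmin₁⟩ y₂ ⟨hy₂, hmin₂⟩
  obtain ⟨t₁, h₁, rfl, -⟩ := hnear y₁ hy₁ hmin₁
  obtain ⟨t₂, h₂, rfl, hd₂⟩ := hnear y₂ hy₂ hmin₂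
  have hw : c * ‖g t₂ - a‖ ≤ (2 * ‖B‖ + c) * ‖g t₀ - a‖ := by
    nlinarith [norm_sub_le_norm_sub_add_norm_sub (g t₂) (g t₀) a]
  have hκw : κ * ‖g t₂ - a‖ < c := by
    have hκ₀ : 0 ≤ κ := by positivity
    nlinarith [mul_le_mul_of_nonneg_left hw hκ₀]
  have hsq := B.mul_norm_sub_sq_le_of_isMinOn_of_isMinOn hc Metric.isOpen_ball (convex_ball t₀ r)
    (fun t ht => (hW ht).2.2) (fun t ht => (hW ht).2.1) (hM.mono fun t ht => (hW ht).1.2)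
    (fun t ht t' ht' => hK t (hW ht).1.1 t' (hW ht').1.1) h₁ h₂ hmin₁ hmin₂
  have hzero : ‖g t₁ - g t₂‖ ^ 2 = 0 :=
    le_antisymm (by nlinarith [sq_nonneg ‖g t₁ - g t₂‖]) (sq_nonneg _)
  simpa [sub_eq_zero] using hzero

end ContinuousLinearMap

end General

section PseudoEuclidean

variable {l p : ℕ}

def pseudoInnerL (l p : ℕ) : PE l p →L[ℝ] PE l p →L[ℝ] ℝ :=
  ∑ i : Fin (l + p), (if (i : ℕ) < l then 1 else -1 : ℝ) •
    (ContinuousLinearMap.mul ℝ ℝ).bilinearComp (EuclideanSpace.proj i) (EuclideanSpace.proj i)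

@[simp]
theorem pseudoInnerL_apply (u v : PE l p) : pseudoInnerL l p u v = pseudoInner l p u v := by
  simp only [pseudoInnerL, pseudoInner, _root_.sum_apply]
  exact Finset.sum_congr rfl fun i _ => by split_ifs <;> simp

theorem Q_eq_pseudoInner (u : PE l p) : Q l p u = pseudoInner l p u u :=
  Finset.sum_congr rfl fun i _ => by split_ifs <;> ring

theorem Q_eq_normL_sq_sub_normP_sq (u : PE l p) : Q l p u = normL l p u ^ 2 - normP l p u ^ 2 := by
  rw [normL, normP, Real.sq_sqrt (by positivity), Real.sq_sqrt (by positivity), Q,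
    ← Finset.sum_sub_distrib]
  exact Finset.sum_congr rfl fun i _ => by split_ifs <;> ring

theorem norm_sq_eq_normL_sq_add_normP_sq (u : PE l p) :
    ‖u‖ ^ 2 = normL l p u ^ 2 + normP l p u ^ 2 := by
  rw [normL, normP, Real.sq_sqrt (by positivity), Real.sq_sqrt (by positivity),
    EuclideanSpace.norm_sq_eq, ← Finset.sum_add_distrib]
  exact Finset.sum_congr rfl fun i _ => by split_ifs <;> simp

theorem PseudoLipschitz.exists_pos_mul_norm_sq_le_Q {L : ℝ} {X : Set (PE l p)}
    (hX : PseudoLipschitz l p L X) (hL : L < 1) :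
    ∃ c > 0, ∀ y ∈ X, ∀ z ∈ X, c * ‖y - z‖ ^ 2 ≤ Q l p (y - z) := by
  set L' := max L 0
  have hL' : L' < 1 := max_lt hL one_pos
  refine ⟨(1 - L' ^ 2) / 2, by nlinarith [le_max_right L 0], fun y hy z hz => ?_⟩
  have hP : normP l p (y - z) ≤ L' * normL l p (y - z) :=
    (hX y hy z hz).trans (by gcongr; exacts [Real.sqrt_nonneg _, le_max_left L 0])
  have hP₀ : 0 ≤ normP l p (y - z) := Real.sqrt_nonneg _
  have hPsq : normP l p (y - z) ^ 2 ≤ L' ^ 2 * normL l p (y - z) ^ 2 := by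
    rw [← mul_pow]; exact pow_le_pow_left₀ hP₀ hP 2
  have hL'sq : 0 ≤ 1 - L' ^ 2 := by nlinarith [le_max_right L 0]
  have hPL : normP l p (y - z) ^ 2 ≤ normL l p (y - z) ^ 2 := by
    nlinarith [sq_nonneg (normL l p (y - z))]
  rw [Q_eq_normL_sq_sub_normP_sq, norm_sq_eq_normL_sq_add_normP_sq]
  nlinarith [mul_le_mul_of_nonneg_left hPL hL'sq]

theorem mm_eq_setOf_isMinOn (X : Set (PE l p)) (a : PE l p) :
    mm l p X a = {y ∈ X | IsMinOn (fun y => pseudoInnerL l p (y - a) (y - a)) X y} := by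
  ext y
  simp only [mm, isMinOn_iff, pseudoInnerL_apply, Q_eq_pseudoInner]

end PseudoEuclidean

theorem nhdsWithin_le_map_of_image_eq_inter {α β : Type*} [TopologicalSpace α]
    [TopologicalSpace β] {X U : Set α} {V : Set β} {g : β → α} {ginv : α → β} {t₀ : β}
    (hU : IsOpen U) (ht₀ : t₀ ∈ V) (hgV : g '' V = X ∩ U) (hginv : ContinuousOn ginv (X ∩ U))
    (hinv : ∀ t ∈ V, ginv (g t) = t) :
    𝓝[X] (g t₀) ≤ map g (𝓝 t₀) := by
  intro s hs
  have hx : g t₀ ∈ X ∩ U := hgV ▸ mem_image_of_mem g ht₀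
  have hcont : Tendsto ginv (𝓝[X ∩ U] (g t₀)) (𝓝 t₀) := by
    simpa only [hinv t₀ ht₀] using (hginv (g t₀) hx).tendsto
  rw [← nhdsWithin_inter_of_mem' (mem_nhdsWithin_of_mem_nhds (hU.mem_nhds hx.2))]
  filter_upwards [hcont hs, self_mem_nhdsWithin] with y hy hyXU
  obtain ⟨t, ht, rfl⟩ := hgV ▸ hyXU
  simpa [hinv t ht] using hy

theorem nash_lemma_pseudoEuclidean_general (l p k : ℕ)
    (L : ℝ) (hL : L < 1)
    (X : Set (PE l p))
    (hlip : PseudoLipschitz l p L X)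
    (x : PE l p)
    (U : Set (PE l p)) (hU : IsOpen U)
    (V : Set (EuclideanSpace ℝ (Fin k))) (hV : IsOpen V)
    (t₀ : EuclideanSpace ℝ (Fin k)) (ht₀ : t₀ ∈ V)
    (g : EuclideanSpace ℝ (Fin k) → PE l p)
    (hg : ContDiffOn ℝ 2 g V) (hgt₀ : g t₀ = x)
    (hgV : g '' V = X ∩ U)
    (ginv : PE l p → EuclideanSpace ℝ (Fin k))
    (hginv : ContinuousOn ginv (X ∩ U)) (hinv : ∀ t ∈ V, ginv (g t) = t)
    (hDg : ∀ t ∈ V, Function.Injective ⇑(fderiv ℝ g t)) :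
    x ∉ closure (medialAxis l p X) := by
  obtain ⟨c, hc₀, hc⟩ := hlip.exists_pos_mul_norm_sq_le_Q hL
  have hgX : ∀ᶠ t in 𝓝 t₀, g t ∈ X :=
    mem_of_superset (hV.mem_nhds ht₀) fun t ht => (hgV.subset (mem_image_of_mem g ht)).1
  have hunique := (pseudoInnerL l p).eventually_subsingleton_isMinOn hc₀
    (by simpa only [pseudoInnerL_apply, Q_eq_pseudoInner] using hc)
    (hg.contDiffAt (hV.mem_nhds ht₀)) (hDg t₀ ht₀) hgX
    (nhdsWithin_le_map_of_image_eq_inter hU ht₀ hgV hginv hinv)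
  subst hgt₀
  rw [mem_closure_iff_frequently, not_frequently]
  filter_upwards [hunique] with a ha
  show ¬(mm l p X a).Nontrivial
  rw [mm_eq_setOf_isMinOn]
  exact not_nontrivial_iff.mpr ha

/-- pseudo-Euclidean Nash lemma: If a nonempty closed `L`-pseudo-Lipschitz set
`X` (`L < 1`) is `C²`-regular of dimension `k` at `x ∈ X` — i.e. there are an open
neighbourhood `U` of `x`, an open `V ⊂ ℝ^k`, `t₀ ∈ V`, and a `C²` map `g : V → ℝ^n` with
`g t₀ = x`, `g` a homeomorphism of `V` onto `X ∩ U` (with continuous inverse `ginv`), and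
`Dg(t)` injective for every `t ∈ V` — then `x ∉ closure M_X`. -/
theorem nash_lemma_pseudoEuclidean (l p k : ℕ) (hl : 1 ≤ l) (hk : 1 ≤ k)
    (L : ℝ) (hL : L < 1)
    (X : Set (PE l p)) (hne : X.Nonempty) (hX : IsClosed X)
    (hlip : PseudoLipschitz l p L X)
    (x : PE l p) (hx : x ∈ X)
    (U : Set (PE l p)) (hU : IsOpen U) (hxU : x ∈ U)
    (V : Set (EuclideanSpace ℝ (Fin k))) (hV : IsOpen V)
    (t₀ : EuclideanSpace ℝ (Fin k)) (ht₀ : t₀ ∈ V)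
    (g : EuclideanSpace ℝ (Fin k) → PE l p)
    (hg : ContDiffOn ℝ 2 g V) (hgt₀ : g t₀ = x)
    (hgV : g '' V = X ∩ U)
    (ginv : PE l p → EuclideanSpace ℝ (Fin k))
    (hginv : ContinuousOn ginv (X ∩ U)) (hinv : ∀ t ∈ V, ginv (g t) = t)
    (hDg : ∀ t ∈ V, Function.Injective ⇑(fderiv ℝ g t)) :
    x ∉ closure (medialAxis l p X) :=
  nash_lemma_pseudoEuclidean_general l p k L hL X hlip x U hU V hV t₀ ht₀ g hg hgt₀ hgV ginv hginv
    hinv hDg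
end
end
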